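/- arXiv:0710.0491 — 2 statements merged into one kernel-verified Lean document; each statement's English description precedes it below -/
import Mathlib

section
/- Let d ≥ 2, let p ≥ 1 be an integer, K ≥ 0, u ∈ ℝ and U : ℕ^d → ℝ, and assume the error expansion hypothesis: there are functions v_J, one for each nonempty J ⊆ {1,…,d}, assigning a real number to each tuple (i_j)_{j∈J} of nonnegative integers, with |v_J| ≤ K, such that u − U(i) = Σ_{∅≠J} v_J((i_j)_{j∈J}) · Π_{j∈J} 2^{−p i_j} for all i ∈ ℕ^d. Assume in addition that there is v̄ ∈ ℝ such that for every ε > 0 there exists n₀ ∈ ℕ with |v_{{1,…,d}}(i_1,…,i_d) − v̄| ≤ ε whenever i_k ≥ n₀ for all k. With S(n) = Σ_{|i|_1 = n} U(i) and u_n = (δ^{d−1} S)(n) (δ the forward difference operator), one has lim_{n→∞} (d−1)! · 2^{pn} · n^{1−d} · |u − u_n| = |v̄| · ((2^p−1)/2^p)^{d−1}. -/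
/-!
Since the level sums of the constant `u` have `(d-1)`-st difference `u`, the error `u - u_n` is
the `(d-1)`-st difference of the level sums of the terms `v_J(i) x^{Σ_{j ∈ J} i_j}`, `x = 2^{-p}`.

If `J` misses a direction `c`, the term does not depend on `i_c`; a difference in such a direction
maps a level sum to the level sum over the slice `i_c = 0` one level higher. After `#Jᶜ` such
differences only slices of size `O(n^{d-2})` with terms of size `O(x^n)` remain, so these error
terms are `o(n^{d-1} x^n)`.

For `J = {1, …, d}` the level sum is `x^l T(l)` with `T(l) = Σ_{|i|₁ = l} v(i)`. There are
`~ l^{d-1}/(d-1)!` indices at level `l`, and all but `O(l^{d-2})` of them have every coordinate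
large, where `v ≈ v̄`; hence `(d-1)! n^{1-d} T(n+k) → v̄`, and the binomial expansion of the
`(d-1)`-st difference gives the limit `v̄ (x - 1)^{d-1}`.
-/

/-- Forward difference operator: `(fdiff F) n = F (n+1) - F n`. -/
def fdiff (F : ℕ → ℝ) : ℕ → ℝ := fun n => F (n + 1) - F n

/-- The finite set of multi-indices `i ∈ ℕ^d` with `|i|₁ = l`. -/
def levelFinset (d l : ℕ) : Finset (Fin d → ℕ) :=
  (Fintype.piFinset fun _ : Fin d => Finset.range (l + 1)).filter (fun i => ∑ k, i k = l)

open Finset Filter Topology fwdDiff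

lemma fdiff_eq_fwdDiff : fdiff = Δ_[1] := rfl

section ForwardDifference

lemma fwdDiff_iter_eq_sum_mul (F : ℕ → ℝ) (m n : ℕ) :
    (Δ_[1])^[m] F n = ∑ k ∈ range (m + 1), (-1 : ℝ) ^ (m - k) * m.choose k * F (n + k) := by
  simp [fwdDiff_iter_eq_sum_shift, zsmul_eq_mul]

lemma fwdDiff_iter_sub (F G : ℕ → ℝ) (m : ℕ) :
    (Δ_[1])^[m] (F - G) = (Δ_[1])^[m] F - (Δ_[1])^[m] G := by
  simpa only [fwdDiff_aux.coe_fwdDiffₗ_pow] using map_sub (fwdDiff_aux.fwdDiffₗ ℕ ℝ 1 ^ m) F G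

lemma abs_fwdDiff_iter_le {F : ℕ → ℝ} {m n : ℕ} {b : ℝ} (hF : ∀ k ≤ m, |F (n + k)| ≤ b) :
    |(Δ_[1])^[m] F n| ≤ 2 ^ m * b := by
  rw [fwdDiff_iter_eq_sum_mul]
  calc _ ≤ ∑ k ∈ range (m + 1), |(-1 : ℝ) ^ (m - k) * m.choose k * F (n + k)| :=
        abs_sum_le_sum_abs _ _
    _ ≤ ∑ k ∈ range (m + 1), (m.choose k : ℝ) * b := by
        gcongr with k hk
        rw [abs_mul, abs_mul, abs_pow, abs_neg, abs_one, one_pow, one_mul, Nat.abs_cast]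
        exact mul_le_mul_of_nonneg_left (hF k (by grind)) (Nat.cast_nonneg _)
    _ = 2 ^ m * b := by
        rw [← sum_mul, ← Nat.cast_sum, Nat.sum_range_choose, Nat.cast_pow, Nat.cast_ofNat]

lemma tendsto_fwdDiff_iter_geom_mul {T w : ℕ → ℝ} {x L : ℝ} (hx : x ≠ 0)
    (hT : ∀ k, Tendsto (fun n => w n * T (n + k)) atTop (𝓝 L)) (m : ℕ) :
    Tendsto (fun n => w n * (x ^ n)⁻¹ * (Δ_[1])^[m] (fun l => x ^ l * T l) n) atTop
      (𝓝 (L * (x - 1) ^ m)) := by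
  have hexpand : ∀ n, w n * (x ^ n)⁻¹ * (Δ_[1])^[m] (fun l => x ^ l * T l) n
      = ∑ k ∈ range (m + 1), (-1 : ℝ) ^ (m - k) * m.choose k * x ^ k * (w n * T (n + k)) := by
    intro n
    rw [fwdDiff_iter_eq_sum_mul, mul_sum]
    refine sum_congr rfl fun k _ => ?_
    rw [pow_add]
    field_simp
  have hbinom : L * (x - 1) ^ m
      = ∑ k ∈ range (m + 1), (-1 : ℝ) ^ (m - k) * m.choose k * x ^ k * L := by
    rw [sub_eq_add_neg, add_pow, mul_sum]
    exact sum_congr rfl fun k _ => by ring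
  simp only [hexpand, hbinom]
  exact tendsto_finsetSum _ fun k _ => (hT k).const_mul _

end ForwardDifference

lemma tendsto_add_div_self_pow (c : ℝ) (m : ℕ) :
    Tendsto (fun n : ℕ => (((n : ℝ) + c) / n) ^ m) atTop (𝓝 1) := by
  have h : Tendsto (fun n : ℕ => ((n : ℝ) / (n + c))⁻¹) atTop (𝓝 1) := by
    simpa using (tendsto_natCast_div_add_atTop c).inv₀ one_ne_zero
  simpa using (h.congr fun n => inv_div _ _).pow m

lemma tendsto_add_pow_mul_inv_pow_succ (c : ℝ) (m : ℕ) :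
    Tendsto (fun n : ℕ => ((n : ℝ) + c) ^ m * ((n : ℝ) ^ (m + 1))⁻¹) atTop (𝓝 0) := by
  have h := (tendsto_add_div_self_pow c m).mul tendsto_inv_atTop_nhds_zero_nat
  rw [mul_zero] at h
  refine h.congr' ?_
  filter_upwards [eventually_ne_atTop 0] with n hn
  rw [div_pow, pow_succ]
  field_simp

section LevelFinset

variable {d : ℕ}

@[simp] lemma mem_levelFinset {l : ℕ} {i : Fin d → ℕ} : i ∈ levelFinset d l ↔ ∑ k, i k = l := by
  refine ⟨fun h => (mem_filter.1 h).2,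
    fun h => mem_filter.2 ⟨Fintype.mem_piFinset.2 fun k => ?_, h⟩⟩
  rw [mem_range, Nat.lt_succ_iff, ← h]
  exact single_le_sum (fun _ _ => Nat.zero_le _) (mem_univ k)

lemma levelFinset_eq_piAntidiag (d l : ℕ) : levelFinset d l = piAntidiag univ l := by
  ext i; simp

lemma card_levelFinset (hd : 0 < d) (l : ℕ) :
    #(levelFinset d l) = (l + (d - 1)).choose (d - 1) := by
  classical
  rw [levelFinset_eq_piAntidiag, ← map_sym_eq_piAntidiag, card_map, sym_univ, card_univ,
    Sym.card_sym_eq_choose, Fintype.card_fin, ← Nat.choose_symm_add]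
  congr 1
  omega

lemma tendsto_card_levelFinset (hd : 0 < d) (k : ℕ) :
    Tendsto (fun n : ℕ => ((d - 1).factorial : ℝ) * ((n : ℝ) ^ (d - 1))⁻¹ *
      #(levelFinset d (n + k))) atTop (𝓝 1) := by
  obtain ⟨e, rfl⟩ : ∃ e, d = e + 1 := ⟨d - 1, by omega⟩
  simp only [add_tsub_cancel_right]
  refine tendsto_of_tendsto_of_tendsto_of_le_of_le' (tendsto_add_div_self_pow (k + 1) e)
    (tendsto_add_div_self_pow (k + e) e) ?_ ?_ <;>
  filter_upwards [eventually_ne_atTop 0] with n hn <;>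
  rw [card_levelFinset hd, add_tsub_cancel_right, div_pow, mul_comm, ← mul_assoc,
    ← div_eq_mul_inv]
  · gcongr
    have h := Nat.pow_le_choose (α := ℝ) e (n + k + e)
    rw [div_le_iff₀ (by positivity)] at h
    convert h using 3
    push_cast [show n + k + e + 1 - e = n + k + 1 by omega]
    ring
  · gcongr
    have h := Nat.choose_le_pow_div (α := ℝ) e (n + k + e)
    rw [le_div_iff₀ (by positivity)] at h
    convert h using 2
    push_cast
    ring

lemma card_levelFinset_filter_apply_eq_le {c c' : Fin d} (hcc' : c ≠ c') (l a : ℕ) :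
    #{i ∈ levelFinset d l | i c = a} ≤ (l + 1) ^ (d - 2) := by
  classical
  set S : Finset (Fin d) := {c, c'}
  have hcard : #(Fintype.piFinset fun k => if k ∈ S then {0} else range (l + 1))
      = (l + 1) ^ (d - 2) := by
    have hS : #Sᶜ = d - 2 := by rw [card_compl, card_pair hcc', Fintype.card_fin]
    simp only [Fintype.card_piFinset, apply_ite, card_singleton, card_range, prod_ite,
      prod_const_one, prod_const, one_mul, ← hS]
    congr 2
    ext; simp
  rw [← hcard]
  -- an index with `i c = a` is determined by its coordinates off `{c, c'}`
  refine card_le_card_of_injOn (fun i k => if k ∈ S then 0 else i k) (fun i hi => ?_) ?_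
  · simp only [coe_filter, mem_levelFinset, Set.mem_ofPred_eq] at hi
    rw [mem_coe, Fintype.mem_piFinset]
    intro k
    by_cases hk : k ∈ S
    · simp [hk]
    · simp only [hk, if_false, mem_range, Nat.lt_succ_iff, ← hi.1]
      exact single_le_sum (fun _ _ => Nat.zero_le _) (mem_univ k)
  · intro i hi i' hi' heq
    simp only [coe_filter, mem_levelFinset, Set.mem_ofPred_eq] at hi hi'
    have hoff : ∀ k ≠ c', i k = i' k := by
      intro k hk
      by_cases hkc : k = c
      · rw [hkc, hi.2, hi'.2]
      · simpa [S, hk, hkc] using congrFun heq k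
    funext k
    by_cases hk : k = c'
    · have h := hi.1.trans hi'.1.symm
      rw [← add_sum_erase _ _ (mem_univ k), ← add_sum_erase _ _ (mem_univ k),
        sum_congr rfl fun m hm => hoff m (hk ▸ ne_of_mem_erase hm)] at h
      exact Nat.add_right_cancel h
    · exact hoff k hk

lemma card_levelFinset_filter_exists_lt_le (hd : 2 ≤ d) (l n₀ : ℕ) :
    #{i ∈ levelFinset d l | ∃ k, i k < n₀} ≤ d * n₀ * (l + 1) ^ (d - 2) := by
  classical
  have : Nontrivial (Fin d) := Fin.nontrivial_iff_two_le.2 hd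
  have hsub : {i ∈ levelFinset d l | ∃ k, i k < n₀}
      ⊆ univ.biUnion fun k => (range n₀).biUnion fun a => {i ∈ levelFinset d l | i k = a} := by
    intro i hi
    obtain ⟨hi, k, hk⟩ := mem_filter.1 hi
    exact mem_biUnion.2 ⟨k, mem_univ _,
      mem_biUnion.2 ⟨i k, mem_range.2 hk, mem_filter.2 ⟨hi, rfl⟩⟩⟩
  calc _ ≤ _ := card_le_card hsub
    _ ≤ #(univ : Finset (Fin d)) * (#(range n₀) * (l + 1) ^ (d - 2)) :=
        card_biUnion_le_card_mul _ _ _ fun k _ => card_biUnion_le_card_mul _ _ _ fun a _ =>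
          let ⟨_, hc'⟩ := exists_ne k; card_levelFinset_filter_apply_eq_le hc'.symm l a
    _ = d * n₀ * (l + 1) ^ (d - 2) := by simp [mul_assoc]

lemma abs_sum_levelFinset_le (hd : 2 ≤ d) {w : (Fin d → ℕ) → ℝ} {M ε : ℝ} {n₀ : ℕ}
    (hM : ∀ i, |w i| ≤ M) (hε0 : 0 ≤ ε) (hε : ∀ i, (∀ k, n₀ ≤ i k) → |w i| ≤ ε) (l : ℕ) :
    |∑ i ∈ levelFinset d l, w i|
      ≤ M * (d * n₀ * (l + 1) ^ (d - 2) : ℕ) + ε * #(levelFinset d l) := by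
  have hM0 : 0 ≤ M := (abs_nonneg _).trans (hM 0)
  rw [← sum_filter_add_sum_filter_not (levelFinset d l) fun i => ∃ k, i k < n₀]
  refine (abs_add_le _ _).trans (add_le_add ?_ ?_)
  · refine (abs_sum_le_sum_abs _ _).trans ((sum_le_card_nsmul _ _ M fun i _ => hM i).trans ?_)
    rw [nsmul_eq_mul, mul_comm]
    gcongr
    exact_mod_cast card_levelFinset_filter_exists_lt_le hd l n₀
  · refine (abs_sum_le_sum_abs _ _).trans
      ((sum_le_card_nsmul _ _ ε fun i hi => ?_).trans ?_)
    · exact hε i fun k => not_lt.1 fun hk => (mem_filter.1 hi).2 ⟨k, hk⟩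
    · rw [nsmul_eq_mul, mul_comm]
      gcongr
      apply filter_subset

lemma tendsto_scaled_sum_levelFinset_of_vanishing (hd : 2 ≤ d) {w : (Fin d → ℕ) → ℝ} {M : ℝ}
    (hM : ∀ i, |w i| ≤ M) (hw : ∀ ε > 0, ∃ n₀ : ℕ, ∀ i, (∀ k, n₀ ≤ i k) → |w i| ≤ ε) (k : ℕ) :
    Tendsto (fun n : ℕ => ((d - 1).factorial : ℝ) * ((n : ℝ) ^ (d - 1))⁻¹ *
      ∑ i ∈ levelFinset d (n + k), w i) atTop (𝓝 0) := by
  rw [Metric.tendsto_nhds]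
  intro ε hε
  obtain ⟨n₀, hn₀⟩ := hw (ε / 4) (by positivity)
  have hbad : Tendsto (fun n : ℕ => ((d - 1).factorial : ℝ) * ((n : ℝ) ^ (d - 1))⁻¹ *
      (M * (d * n₀ * (n + k + 1) ^ (d - 2) : ℕ))) atTop (𝓝 0) := by
    have h := (tendsto_add_pow_mul_inv_pow_succ (k + 1) (d - 2)).const_mul
      ((d - 1).factorial * M * d * n₀ : ℝ)
    rw [mul_zero, show d - 2 + 1 = d - 1 by omega] at h
    refine h.congr fun n => ?_
    push_cast
    ring
  filter_upwards [hbad.eventually (gt_mem_nhds (div_pos hε four_pos)),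
    (tendsto_card_levelFinset (show 0 < d by omega) k).eventually (gt_mem_nhds one_lt_two)]
    with n hbadn hcardn
  rw [Real.dist_eq, sub_zero, abs_mul, abs_of_nonneg (by positivity)]
  calc _ ≤ ((d - 1).factorial : ℝ) * ((n : ℝ) ^ (d - 1))⁻¹ *
        (M * (d * n₀ * (n + k + 1) ^ (d - 2) : ℕ) + ε / 4 * #(levelFinset d (n + k))) := by
        gcongr
        exact abs_sum_levelFinset_le hd hM (by positivity) hn₀ (n + k)
    _ = ((d - 1).factorial : ℝ) * ((n : ℝ) ^ (d - 1))⁻¹ *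
          (M * (d * n₀ * (n + k + 1) ^ (d - 2) : ℕ))
        + ε / 4 * (((d - 1).factorial : ℝ) * ((n : ℝ) ^ (d - 1))⁻¹ *
          #(levelFinset d (n + k))) := by
        ring
    _ < ε / 4 + ε / 4 * 2 := by gcongr
    _ < ε := by linarith

lemma tendsto_scaled_sum_levelFinset (hd : 2 ≤ d) {w : (Fin d → ℕ) → ℝ} {K vbar : ℝ}
    (hK : ∀ i, |w i| ≤ K) (hw : ∀ ε > 0, ∃ n₀ : ℕ, ∀ i, (∀ k, n₀ ≤ i k) → |w i - vbar| ≤ ε)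
    (k : ℕ) :
    Tendsto (fun n : ℕ => ((d - 1).factorial : ℝ) * ((n : ℝ) ^ (d - 1))⁻¹ *
      ∑ i ∈ levelFinset d (n + k), w i) atTop (𝓝 vbar) := by
  have h := ((tendsto_card_levelFinset (show 0 < d by omega) k).const_mul vbar).add
    (tendsto_scaled_sum_levelFinset_of_vanishing hd (M := K + |vbar|)
      (fun i => (abs_sub _ _).trans (by linarith [hK i])) hw k)
  rw [mul_one, add_zero] at h
  refine h.congr fun n => ?_
  simp only [sum_sub_distrib, sum_const, nsmul_eq_mul]
  ring

end LevelFinset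

section LevelSlice

variable {d : ℕ}

def levelSlice (d : ℕ) (B : Finset (Fin d)) (l : ℕ) : Finset (Fin d → ℕ) :=
  {i ∈ levelFinset d l | ∀ b ∈ B, i b = 0}

@[simp] lemma mem_levelSlice {B : Finset (Fin d)} {l : ℕ} {i : Fin d → ℕ} :
    i ∈ levelSlice d B l ↔ ∑ k, i k = l ∧ ∀ b ∈ B, i b = 0 := by
  simp [levelSlice]

@[simp] lemma levelSlice_empty (d l : ℕ) : levelSlice d ∅ l = levelFinset d l := by
  ext; simp

lemma fwdDiff_sum_levelSlice {g : (Fin d → ℕ) → ℝ} {B : Finset (Fin d)} {c : Fin d}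
    (hc : c ∉ B) (hg : ∀ i, g (i + Pi.single c 1) = g i) (n : ℕ) :
    Δ_[1] (fun l => ∑ i ∈ levelSlice d B l, g i) n
      = ∑ i ∈ levelSlice d (insert c B) (n + 1), g i := by
  have hzero : {i ∈ levelSlice d B (n + 1) | i c = 0} = levelSlice d (insert c B) (n + 1) := by
    ext i; simp only [mem_filter, mem_levelSlice, forall_mem_insert]; tauto
  have hshift : ∑ i ∈ levelSlice d B (n + 1) with i c ≠ 0, g i
      = ∑ i ∈ levelSlice d B n, g i := by
    have hsum : ∀ i : Fin d → ℕ, ∑ k, (i + Pi.single c 1 : Fin d → ℕ) k = ∑ k, i k + 1 :=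
      fun i => by simp [sum_add_distrib]
    have hoff : ∀ (i : Fin d → ℕ) (m : ℕ), ∀ b ∈ B, (i + Pi.single c m : Fin d → ℕ) b = i b :=
      fun i m b hb => by simp [Pi.single_eq_of_ne (ne_of_mem_of_not_mem hb hc)]
    have hcancel : ∀ i : Fin d → ℕ, i c ≠ 0 → i - Pi.single c 1 + Pi.single c 1 = i := by
      intro i hi
      funext k
      by_cases hk : k = c
      · subst hk
        simp only [Pi.add_apply, Pi.sub_apply, Pi.single_eq_same]
        omega
      · simp [hk]
    refine sum_nbij' (· - Pi.single c 1) (· + Pi.single c 1) ?_ ?_ ?_ ?_ ?_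
    · intro i hi
      simp only [mem_filter, mem_levelSlice] at hi ⊢
      obtain ⟨⟨hl, hB⟩, hic⟩ := hi
      refine ⟨?_, fun b hb => ?_⟩
      · have h := hsum (i - Pi.single c 1)
        rw [hcancel i hic] at h
        omega
      · rw [← hoff (i - Pi.single c 1) 1 b hb, hcancel i hic, hB b hb]
    · intro i hi
      simp only [mem_filter, mem_levelSlice] at hi ⊢
      exact ⟨⟨by rw [hsum, hi.1], fun b hb => by rw [hoff _ 1 b hb, hi.2 b hb]⟩, by simp⟩
    · intro i hi
      exact hcancel i (mem_filter.1 hi).2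
    · intro i _
      simp
    · intro i hi
      rw [← hg (i - Pi.single c 1), hcancel i (mem_filter.1 hi).2]
  simp only [fwdDiff]
  rw [← sum_filter_add_sum_filter_not (levelSlice d B (n + 1)) (fun i => i c = 0), hzero, hshift]
  ring

lemma fwdDiff_iter_sum_levelSlice {g : (Fin d → ℕ) → ℝ} {B C : Finset (Fin d)}
    (hCB : Disjoint C B) (hg : ∀ i i', (∀ j ∉ C, i j = i' j) → g i = g i') (n : ℕ) :
    (Δ_[1])^[#C] (fun l => ∑ i ∈ levelSlice d B l, g i) n
      = ∑ i ∈ levelSlice d (C ∪ B) (n + #C), g i := by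
  induction C using Finset.induction_on generalizing B n with
  | empty => simp
  | insert c C hcC ih =>
    rw [disjoint_insert_left] at hCB
    have hstep : Δ_[1] (fun l => ∑ i ∈ levelSlice d B l, g i)
        = fun l => ∑ i ∈ levelSlice d (insert c B) (l + 1), g i :=
      funext <| fwdDiff_sum_levelSlice hCB.1 fun i => hg _ _ fun j hj => by
        simp [Pi.single_eq_of_ne (ne_of_mem_of_not_mem (mem_insert_self c C) hj).symm]
    rw [card_insert_of_notMem hcC, Function.iterate_succ_apply, hstep,
      fwdDiff_iter_comp_add 1 (fun l => ∑ i ∈ levelSlice d (insert c B) l, g i) 1,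
      ih (disjoint_insert_right.2 ⟨hcC, hCB.2⟩)
        fun i i' h => hg i i' fun j hj => h j fun hjC => hj (mem_insert_of_mem hjC),
      union_insert, insert_union, add_right_comm, add_assoc]

lemma levelSlice_erase_eq_singleton (j : Fin d) (l : ℕ) :
    levelSlice d (univ.erase j) l = {Pi.single j l} := by
  ext i
  simp only [mem_levelSlice, mem_erase, mem_univ, and_true, mem_singleton]
  constructor
  · rintro ⟨hl, hzero⟩
    funext k
    by_cases hk : k = j
    · subst hk
      rw [Pi.single_eq_same, ← hl, sum_eq_single k (fun b _ hb => hzero b hb) (by simp)]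
    · rw [Pi.single_eq_of_ne hk, hzero k hk]
  · rintro rfl
    exact ⟨Fintype.sum_pi_single' j l, fun b hb => by simp [hb]⟩

lemma fwdDiff_iter_sum_levelFinset_const (hd : 0 < d) (a : ℝ) (n : ℕ) :
    (Δ_[1])^[d - 1] (fun l => ∑ _i ∈ levelFinset d l, a) n = a := by
  have h := fwdDiff_iter_sum_levelSlice (g := fun _ => a) (disjoint_empty_right
    (univ.erase (⟨0, hd⟩ : Fin d))) (fun _ _ _ => rfl) n
  simp_rw [levelSlice_empty, union_empty, levelSlice_erase_eq_singleton, sum_singleton,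
    card_erase_of_mem (mem_univ _), card_univ, Fintype.card_fin] at h
  exact h

lemma sub_fwdDiff_iter_sum_levelFinset (hd : 0 < d) {ι : Type*} (s : Finset ι) {u : ℝ}
    {U : (Fin d → ℕ) → ℝ} {G : ι → (Fin d → ℕ) → ℝ} (h : ∀ i, u - U i = ∑ J ∈ s, G J i)
    (n : ℕ) :
    u - (Δ_[1])^[d - 1] (fun l => ∑ i ∈ levelFinset d l, U i) n
      = ∑ J ∈ s, (Δ_[1])^[d - 1] (fun l => ∑ i ∈ levelFinset d l, G J i) n := by
  have hU : (fun l => ∑ i ∈ levelFinset d l, U i)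
      = (fun l => ∑ _i ∈ levelFinset d l, u)
        - ∑ J ∈ s, fun l => ∑ i ∈ levelFinset d l, G J i := by
    funext l
    rw [Pi.sub_apply, Finset.sum_apply, sum_comm, ← sum_sub_distrib]
    exact sum_congr rfl fun i _ => by rw [← h i]; ring
  rw [hU, fwdDiff_iter_sub, fwdDiff_iter_finsetSum, Pi.sub_apply, Finset.sum_apply,
    fwdDiff_iter_sum_levelFinset_const hd]
  ring

end LevelSlice

section ErrorTerms

variable {d : ℕ}

lemma tendsto_scaled_fwdDiff_iter_univ (hd : 2 ≤ d) {x : ℝ} (hx : x ≠ 0)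
    {w : (Fin d → ℕ) → ℝ} {K vbar : ℝ} (hK : ∀ i, |w i| ≤ K)
    (hw : ∀ ε > 0, ∃ n₀ : ℕ, ∀ i, (∀ k, n₀ ≤ i k) → |w i - vbar| ≤ ε) :
    Tendsto (fun n : ℕ => ((d - 1).factorial : ℝ) * ((n : ℝ) ^ (d - 1))⁻¹ * (x ^ n)⁻¹ *
      (Δ_[1])^[d - 1] (fun l => ∑ i ∈ levelFinset d l, w i * x ^ ∑ j, i j) n)
      atTop (𝓝 (vbar * (x - 1) ^ (d - 1))) := by
  have hgeom : (fun l => ∑ i ∈ levelFinset d l, w i * x ^ ∑ j, i j)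
      = fun l => x ^ l * ∑ i ∈ levelFinset d l, w i := by
    funext l
    rw [mul_sum]
    exact sum_congr rfl fun i hi => by rw [mem_levelFinset.1 hi, mul_comm]
  rw [hgeom]
  exact tendsto_fwdDiff_iter_geom_mul
    (w := fun n : ℕ => ((d - 1).factorial : ℝ) * ((n : ℝ) ^ (d - 1))⁻¹)
    (T := fun l => ∑ i ∈ levelFinset d l, w i) hx (tendsto_scaled_sum_levelFinset hd hK hw) _

lemma abs_sum_levelSlice_compl_le {J : Finset (Fin d)} {c c' : Fin d} (hc : c ∉ J)
    (hc' : c' ∈ J) {x : ℝ} (hx0 : 0 < x) {w : (Fin d → ℕ) → ℝ} {K : ℝ} (hK : ∀ i, |w i| ≤ K)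
    (l : ℕ) :
    |∑ i ∈ levelSlice d Jᶜ l, w i * x ^ ∑ j ∈ J, i j| ≤ (l + 1) ^ (d - 2) * (K * x ^ l) := by
  have hK0 : 0 ≤ K := (abs_nonneg _).trans (hK 0)
  refine (abs_sum_le_sum_abs _ _).trans
    ((sum_le_card_nsmul _ _ (K * x ^ l) fun i hi => ?_).trans ?_)
  · obtain ⟨hl, hzero⟩ := mem_levelSlice.1 hi
    rw [← sum_add_sum_compl J, sum_eq_zero hzero, add_zero] at hl
    rw [abs_mul, hl, abs_of_pos (pow_pos hx0 l)]
    gcongr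
    exact hK i
  · rw [nsmul_eq_mul]
    gcongr
    have hsub : levelSlice d Jᶜ l ⊆ {i ∈ levelFinset d l | i c = 0} := fun i hi => by
      obtain ⟨hl, hzero⟩ := mem_levelSlice.1 hi
      exact mem_filter.2 ⟨mem_levelFinset.2 hl, hzero c (mem_compl.2 hc)⟩
    exact_mod_cast (card_le_card hsub).trans
      (card_levelFinset_filter_apply_eq_le (ne_of_mem_of_not_mem hc' hc).symm l 0)

lemma abs_fwdDiff_iter_sum_levelFinset_le {J : Finset (Fin d)} (hJ : J.Nonempty)
    (hJu : J ≠ univ) {x : ℝ} (hx0 : 0 < x) (hx1 : x ≤ 1) {w : (Fin d → ℕ) → ℝ} {K : ℝ}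
    (hwJ : ∀ i i', (∀ j ∈ J, i j = i' j) → w i = w i') (hK : ∀ i, |w i| ≤ K) (n : ℕ) :
    |(Δ_[1])^[d - 1] (fun l => ∑ i ∈ levelFinset d l, w i * x ^ ∑ j ∈ J, i j) n|
      ≤ 2 ^ (#J - 1) * ((n + d : ℝ) ^ (d - 2) * (K * x ^ n)) := by
  have hK0 : 0 ≤ K := (abs_nonneg _).trans (hK 0)
  obtain ⟨c, hc⟩ : ∃ c, c ∉ J := by
    by_contra! h
    exact hJu (eq_univ_iff_forall.2 h)
  obtain ⟨c', hc'⟩ := hJ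
  have hdim : #J + #Jᶜ = d := (card_add_card_compl J).trans (Fintype.card_fin d)
  have hJpos : 0 < #J := card_pos.2 ⟨c', hc'⟩
  have hslice := fwdDiff_iter_sum_levelSlice (d := d) (B := ∅) (disjoint_empty_right Jᶜ)
    (g := fun i => w i * x ^ ∑ j ∈ J, i j) fun i i' h => by
      have hiJ : ∀ j ∈ J, i j = i' j := fun j hj => h j (by simpa using hj)
      simp only [hwJ i i' hiJ, sum_congr rfl hiJ]
  simp only [levelSlice_empty, union_empty] at hslice
  rw [show d - 1 = (#J - 1) + #Jᶜ by omega, Function.iterate_add_apply]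
  refine abs_fwdDiff_iter_le fun k hk => ?_
  rw [hslice]
  refine (abs_sum_levelSlice_compl_le hc hc' hx0 hK _).trans ?_
  have hpoly : ((n + k + #Jᶜ : ℕ) + 1 : ℝ) ^ (d - 2) ≤ (n + d) ^ (d - 2) := by
    refine pow_le_pow_left₀ (by positivity) ?_ _
    exact_mod_cast (by omega : n + k + #Jᶜ + 1 ≤ n + d)
  have hgeom : x ^ (n + k + #Jᶜ) ≤ x ^ n := pow_le_pow_of_le_one hx0.le hx1 (by omega)
  exact mul_le_mul hpoly (mul_le_mul_of_nonneg_left hgeom hK0) (by positivity) (by positivity)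

lemma tendsto_scaled_fwdDiff_iter_of_ne_univ {J : Finset (Fin d)} (hJ : J.Nonempty)
    (hJu : J ≠ univ) {x : ℝ} (hx0 : 0 < x) (hx1 : x ≤ 1) {w : (Fin d → ℕ) → ℝ} {K : ℝ}
    (hwJ : ∀ i i', (∀ j ∈ J, i j = i' j) → w i = w i') (hK : ∀ i, |w i| ≤ K) :
    Tendsto (fun n : ℕ => ((d - 1).factorial : ℝ) * ((n : ℝ) ^ (d - 1))⁻¹ * (x ^ n)⁻¹ *
      (Δ_[1])^[d - 1] (fun l => ∑ i ∈ levelFinset d l, w i * x ^ ∑ j ∈ J, i j) n)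
      atTop (𝓝 0) := by
  have hd : 2 ≤ d := by
    have h1 := card_pos.2 hJ
    have h2 := (card_lt_iff_ne_univ J).2 hJu
    rw [Fintype.card_fin] at h2
    omega
  have hlim := (tendsto_add_pow_mul_inv_pow_succ d (d - 2)).const_mul
    ((d - 1).factorial * 2 ^ (#J - 1) * K : ℝ)
  rw [mul_zero, show d - 2 + 1 = d - 1 by omega] at hlim
  refine squeeze_zero_norm (fun n => ?_) hlim
  rw [Real.norm_eq_abs, abs_mul, abs_of_nonneg (by positivity)]
  calc _ ≤ ((d - 1).factorial : ℝ) * ((n : ℝ) ^ (d - 1))⁻¹ * (x ^ n)⁻¹ *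
        (2 ^ (#J - 1) * ((n + d : ℝ) ^ (d - 2) * (K * x ^ n))) := by
        gcongr
        exact abs_fwdDiff_iter_sum_levelFinset_le hJ hJu hx0 hx1 hwJ hK n
    _ = _ := by
        field_simp

theorem tendsto_scaled_sub_fwdDiff_iter (hd : 2 ≤ d) {x : ℝ} (hx0 : 0 < x) (hx1 : x ≤ 1)
    {K u vbar : ℝ} {U : (Fin d → ℕ) → ℝ} {v : Finset (Fin d) → (Fin d → ℕ) → ℝ}
    (hdep : ∀ J i i', (∀ j ∈ J, i j = i' j) → v J i = v J i')
    (hbound : ∀ J i, |v J i| ≤ K)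
    (hexp : ∀ i, u - U i = ∑ J ∈ univ.filter (fun J : Finset (Fin d) => J.Nonempty),
      v J i * x ^ ∑ j ∈ J, i j)
    (hcont : ∀ ε > 0, ∃ n₀ : ℕ, ∀ i, (∀ k, n₀ ≤ i k) → |v univ i - vbar| ≤ ε) :
    Tendsto (fun n : ℕ => ((d - 1).factorial : ℝ) * ((n : ℝ) ^ (d - 1))⁻¹ * (x ^ n)⁻¹ *
      (u - (Δ_[1])^[d - 1] (fun l => ∑ i ∈ levelFinset d l, U i) n))
      atTop (𝓝 (vbar * (x - 1) ^ (d - 1))) := by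
  have huniv : univ ∈ univ.filter (fun J : Finset (Fin d) => J.Nonempty) :=
    mem_filter.2 ⟨mem_univ _, univ_nonempty_iff.2 ⟨⟨0, by omega⟩⟩⟩
  rw [← if_pos huniv (t := vbar * (x - 1) ^ (d - 1)) (e := 0),
    ← sum_ite_eq' _ univ fun _ => vbar * (x - 1) ^ (d - 1)]
  simp_rw [sub_fwdDiff_iter_sum_levelFinset (by omega) _ hexp, mul_sum]
  refine tendsto_finsetSum _ fun J hJ => ?_
  split_ifs with hJu
  · subst hJu
    simpa using tendsto_scaled_fwdDiff_iter_univ hd hx0.ne' (hbound univ) hcont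
  · exact tendsto_scaled_fwdDiff_iter_of_ne_univ (mem_filter.1 hJ).2 hJu hx0 hx1 (hdep J)
      (hbound J)

end ErrorTerms

theorem combination_error_asymptotics_general (d p : ℕ) (hd : 2 ≤ d)
    (K : ℝ) (u : ℝ) (U : (Fin d → ℕ) → ℝ)
    (v : Finset (Fin d) → (Fin d → ℕ) → ℝ) (vbar : ℝ)
    (hdep : ∀ (J : Finset (Fin d)) (i i' : Fin d → ℕ),
      (∀ j ∈ J, i j = i' j) → v J i = v J i')
    (hbound : ∀ (J : Finset (Fin d)) (i : Fin d → ℕ), |v J i| ≤ K)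
    (hexp : ∀ i : Fin d → ℕ,
      u - U i = ∑ J ∈ Finset.univ.filter (fun J : Finset (Fin d) => J.Nonempty),
        v J i * ∏ j ∈ J, ((1 : ℝ) / 2) ^ (p * i j))
    (hcont : ∀ ε : ℝ, 0 < ε → ∃ n₀ : ℕ, ∀ i : Fin d → ℕ,
      (∀ k, n₀ ≤ i k) → |v Finset.univ i - vbar| ≤ ε) :
    Filter.Tendsto
      (fun n : ℕ => (Nat.factorial (d - 1) : ℝ) * (2 : ℝ) ^ (p * n) *
        ((n : ℝ) ^ (d - 1))⁻¹ *
        |u - fdiff^[d - 1] (fun l => ∑ i ∈ levelFinset d l, U i) n|)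
      Filter.atTop
      (nhds (|vbar| * (((2 : ℝ) ^ p - 1) / (2 : ℝ) ^ p) ^ (d - 1))) := by
  set x : ℝ := ((2 : ℝ) ^ p)⁻¹
  have hhalf : ∀ m, ((1 : ℝ) / 2) ^ (p * m) = x ^ m := fun m => by
    rw [pow_mul, one_div, inv_pow]
  have hx1 : x ≤ 1 := inv_le_one_of_one_le₀ (one_le_pow₀ one_le_two)
  have hexp' : ∀ i, u - U i = ∑ J ∈ univ.filter (fun J : Finset (Fin d) => J.Nonempty),
      v J i * x ^ ∑ j ∈ J, i j := fun i => by
    simp only [hexp, hhalf, prod_pow_eq_pow_sum]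
  have hlim := tendsto_scaled_sub_fwdDiff_iter hd (by positivity) hx1 hdep hbound hexp' hcont
  have hconst : |x - 1| = ((2 : ℝ) ^ p - 1) / (2 : ℝ) ^ p := by
    rw [abs_of_nonpos (sub_nonpos.2 hx1), neg_sub, sub_div, div_self (by positivity), one_div]
  rw [fdiff_eq_fwdDiff, ← hconst, ← abs_pow, ← abs_mul]
  refine hlim.abs.congr fun n => ?_
  rw [abs_mul, abs_of_nonneg (by positivity), ← hhalf, one_div, inv_pow, inv_inv]
  ring

/-- Exact asymptotics of the combination-technique error (Corollary `exactAsympt`):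
`(d-1)! · 2^{pn} · n^{1-d} · |u - u_n| → |v̄| ((2^p - 1)/2^p)^{d-1}`. -/
theorem combination_error_asymptotics (d p : ℕ) (hd : 2 ≤ d) (hp : 1 ≤ p)
    (K : ℝ) (hK : 0 ≤ K) (u : ℝ) (U : (Fin d → ℕ) → ℝ)
    (v : Finset (Fin d) → (Fin d → ℕ) → ℝ) (vbar : ℝ)
    (hdep : ∀ (J : Finset (Fin d)) (i i' : Fin d → ℕ),
      (∀ j ∈ J, i j = i' j) → v J i = v J i')
    (hbound : ∀ (J : Finset (Fin d)) (i : Fin d → ℕ), |v J i| ≤ K)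
    (hexp : ∀ i : Fin d → ℕ,
      u - U i = ∑ J ∈ Finset.univ.filter (fun J : Finset (Fin d) => J.Nonempty),
        v J i * ∏ j ∈ J, ((1 : ℝ) / 2) ^ (p * i j))
    (hcont : ∀ ε : ℝ, 0 < ε → ∃ n₀ : ℕ, ∀ i : Fin d → ℕ,
      (∀ k, n₀ ≤ i k) → |v Finset.univ i - vbar| ≤ ε) :
    Filter.Tendsto
      (fun n : ℕ => (Nat.factorial (d - 1) : ℝ) * (2 : ℝ) ^ (p * n) *
        ((n : ℝ) ^ (d - 1))⁻¹ *
        |u - fdiff^[d - 1] (fun l => ∑ i ∈ levelFinset d l, U i) n|)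
      Filter.atTop
      (nhds (|vbar| * (((2 : ℝ) ^ p - 1) / (2 : ℝ) ^ p) ^ (d - 1))) :=
  combination_error_asymptotics_general d p hd K u U v vbar hdep hbound hexp hcont
end

section
/- Let d ≥ 1, let f : ℕ → ℝ, and define F(n) = Σ_{l=0}^{n} f(l)·binom(n−l+d−1, d−1). Then for every k with 0 ≤ k < d and every n ∈ ℕ: (δ^k F)(n) = Σ_{j=1}^{k} f(n+j)·binom(d−j−1, k−j) + Σ_{l=0}^{n} f(l)·binom(n−l+d−1, d−k−1), where the first sum is empty for k = 0 and δ is the forward difference operator. -/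
/-!
Write `S_r(N) = ∑_{l ≤ N} f(l) binom(N - l, r)` (`chooseConv f r N`). Pascal's rule gives
`δ S_{r+1} = S_r`, and since `binom(N - l, r) = 0` for `l > N - r`, we have
`F(n) = S_{d-1}(n + d - 1)`. Hence `δ^k F(n) = S_{d-1-k}(n + d - 1)`, a sum over `l ≤ n + k`; its
terms with `l = n + j > n` give the first sum after the symmetry
`binom(d-1-j, d-1-k) = binom(d-1-j, k-j)`.
-/

open Finset
open scoped fwdDiff

section ChooseConv

variable {R : Type*} [Ring R] (f : ℕ → R)

def chooseConv (r N : ℕ) : R := ∑ l ∈ range (N + 1), f l * ((N - l).choose r : R)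

lemma fwdDiff_chooseConv_succ (r : ℕ) : Δ_[1] (chooseConv f (r + 1)) = chooseConv f r := by
  ext N
  have pascal : ∀ l ∈ range (N + 1), f l * ((N + 1 - l).choose (r + 1) : R)
      = f l * ((N - l).choose r : R) + f l * ((N - l).choose (r + 1) : R) := by
    intro l hl
    rw [Nat.sub_add_comm (mem_range_succ_iff.mp hl), Nat.choose_succ_succ', Nat.cast_add, mul_add]
  simp only [fwdDiff, chooseConv]
  rw [sum_range_succ, Nat.sub_self, Nat.choose_zero_succ, Nat.cast_zero, mul_zero, add_zero,
    sum_congr rfl pascal, sum_add_distrib, add_sub_cancel_right]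

lemma fwdDiff_iter_chooseConv {k r : ℕ} (hk : k ≤ r) :
    (Δ_[1])^[k] (chooseConv f r) = chooseConv f (r - k) := by
  induction k with
  | zero => rfl
  | succ k ih =>
    rw [Function.iterate_succ_apply', ih (by omega), show r - k = r - (k + 1) + 1 by omega,
      fwdDiff_chooseConv_succ]

lemma chooseConv_eq_sum_range_sub (r N : ℕ) :
    chooseConv f r N = ∑ l ∈ range (N - r + 1), f l * ((N - l).choose r : R) := by
  refine (sum_subset (range_subset_range.mpr (by omega)) fun l hN hl => ?_).symm
  rw [mem_range] at hN hl
  rw [Nat.choose_eq_zero_of_lt (by omega), Nat.cast_zero, mul_zero]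

lemma chooseConv_sub_add_eq_sum {e k : ℕ} (hk : k ≤ e) (n : ℕ) :
    chooseConv f (e - k) (n + e)
      = (∑ j ∈ Icc 1 k, f (n + j) * ((e - j).choose (k - j) : R))
        + ∑ l ∈ range (n + 1), f l * ((n - l + e).choose (e - k) : R) := by
  rw [chooseConv_eq_sum_range_sub, show n + e - (e - k) + 1 = n + 1 + k by omega, sum_range_add,
    add_comm]
  congr 1
  · rw [← Ico_add_one_right_eq_Icc, sum_Ico_eq_sum_range, Nat.add_sub_cancel]
    refine sum_congr rfl fun i hi => ?_
    rw [mem_range] at hi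
    rw [add_assoc, show n + e - (n + (1 + i)) = e - (1 + i) by omega,
      Nat.choose_symm_of_eq_add (show e - (1 + i) = e - k + (k - (1 + i)) by omega)]
  · refine sum_congr rfl fun l hl => ?_
    rw [Nat.sub_add_comm (mem_range_succ_iff.mp hl)]

end ChooseConv

/-- Differencing formula (Lemma `tech`, part 1): for
`F(n) = Σ_{l=0}^n f(l)·binom(n-l+d-1, d-1)` and `0 ≤ k < d`,
`δ^k F(n) = Σ_{j=1}^k f(n+j)·binom(d-j-1, k-j) + Σ_{l=0}^n f(l)·binom(n-l+d-1, d-k-1)`. -/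
theorem differencing_formula (d : ℕ) (hd : 1 ≤ d) (f : ℕ → ℝ) :
    ∀ k : ℕ, k < d → ∀ n : ℕ,
      fdiff^[k] (fun m =>
          ∑ l ∈ Finset.range (m + 1), f l * (Nat.choose (m - l + d - 1) (d - 1) : ℝ)) n
        = (∑ j ∈ Finset.Icc 1 k, f (n + j) * (Nat.choose (d - j - 1) (k - j) : ℝ))
          + ∑ l ∈ Finset.range (n + 1), f l * (Nat.choose (n - l + d - 1) (d - k - 1) : ℝ) := by
  obtain ⟨e, rfl⟩ := Nat.exists_eq_add_of_le' hd
  intro k hk n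
  simp only [Nat.sub_sub, Nat.add_sub_add_right, ← add_assoc, Nat.add_sub_cancel]
  have hF : (fun m => ∑ l ∈ range (m + 1), f l * ((m - l + e).choose e : ℝ))
      = fun m => chooseConv f e (m + e) := by
    funext m
    simpa using (chooseConv_sub_add_eq_sum f (Nat.zero_le e) m).symm
  have hfdiff : fdiff = Δ_[1] := rfl
  rw [hF, hfdiff, fwdDiff_iter_comp_add, fwdDiff_iter_chooseConv f (by omega),
    chooseConv_sub_add_eq_sum f (by omega)]
end
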